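/- arXiv:2002.09215 — 3 statements merged into one kernel-verified Lean document; each statement's English description precedes it below -/
import Mathlib

section
/- The time-dependent Bachelier put pricing function attains the terminal payoff: for every x ∈ ℝ, p(x,u) → max(Δ−x, 0) as u → 1 from the left. -/
/-!
As `u → 1⁻` the remaining variance `V = w 1 - w u = ∫ t in u..1, v t` tends to `0` through
positive values, so it suffices that `c Φ(c/√V) + √V φ(c/√V) → max c 0` as `V → 0⁺`.
The second term is at most `√V / √(2π)`, and `c/√V → ±∞` according to the sign of `c`,
so `Φ(c/√V)` tends to `1` or `0`.
-/

open MeasureTheory Real Filter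

/-- The standard normal density. -/
noncomputable def stdNormalPDF (x : ℝ) : ℝ :=
  (Real.sqrt (2 * Real.pi))⁻¹ * Real.exp (-(x ^ 2) / 2)

/-- The standard normal cumulative distribution function. -/
noncomputable def stdNormalCDF (x : ℝ) : ℝ :=
  ∫ t in Set.Iic x, stdNormalPDF t

open ProbabilityTheory Set Topology

lemma stdNormalPDF_eq_gaussianPDFReal : stdNormalPDF = gaussianPDFReal 0 1 := by
  funext x
  simp [stdNormalPDF, gaussianPDFReal, neg_div]

lemma stdNormalPDF_nonneg (x : ℝ) : 0 ≤ stdNormalPDF x := by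
  rw [stdNormalPDF_eq_gaussianPDFReal]
  exact gaussianPDFReal_nonneg 0 1 x

lemma stdNormalPDF_le (x : ℝ) : stdNormalPDF x ≤ (√(2 * π))⁻¹ :=
  mul_le_of_le_one_right (by positivity) (exp_le_one_iff.2 (by nlinarith [sq_nonneg x]))

lemma stdNormalCDF_eq_cdf_gaussianReal : stdNormalCDF = cdf (gaussianReal 0 1) := by
  funext x
  rw [cdf_eq_real, measureReal_def, gaussianReal_apply_eq_integral _ one_ne_zero,
    ENNReal.toReal_ofReal (setIntegral_nonneg measurableSet_Iic
      fun t _ => gaussianPDFReal_nonneg 0 1 t), stdNormalCDF, stdNormalPDF_eq_gaussianPDFReal]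

lemma tendsto_mul_stdNormalCDF_div_nhdsGT_zero (c : ℝ) :
    Tendsto (fun s => c * stdNormalCDF (c / s)) (𝓝[>] 0) (𝓝 (max c 0)) := by
  simp only [div_eq_mul_inv, stdNormalCDF_eq_cdf_gaussianReal]
  rcases lt_trichotomy c 0 with hc | rfl | hc
  · have hΦ := (tendsto_cdf_atBot (gaussianReal 0 1)).comp
      (tendsto_inv_nhdsGT_zero.const_mul_atTop_of_neg hc)
    simpa [max_eq_right hc.le] using hΦ.const_mul c
  · simp
  · have hΦ := (tendsto_cdf_atTop (gaussianReal 0 1)).comp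
      (tendsto_inv_nhdsGT_zero.const_mul_atTop hc)
    simpa [max_eq_left hc.le] using hΦ.const_mul c

lemma tendsto_mul_stdNormalPDF_div_nhdsGT_zero (c : ℝ) :
    Tendsto (fun s => s * stdNormalPDF (c / s)) (𝓝[>] 0) (𝓝 0) := by
  have hbound : Tendsto (fun s : ℝ => s * (√(2 * π))⁻¹) (𝓝[>] 0) (𝓝 0) := by
    simpa using ((continuous_mul_const (√(2 * π))⁻¹).tendsto' 0 0 (zero_mul _)).mono_left
      nhdsWithin_le_nhds
  refine squeeze_zero' ?_ ?_ hbound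
  · filter_upwards [self_mem_nhdsWithin] with s hs
    exact mul_nonneg (le_of_lt hs) (stdNormalPDF_nonneg _)
  · filter_upwards [self_mem_nhdsWithin] with s hs
    exact mul_le_mul_of_nonneg_left (stdNormalPDF_le _) (le_of_lt hs)

lemma tendsto_sqrt_nhdsGT_zero : Tendsto (√·) (𝓝[>] (0 : ℝ)) (𝓝[>] 0) := by
  have hmaps : MapsTo (√·) (Ioi (0 : ℝ)) (Ioi 0) := fun _ hx => sqrt_pos.2 hx
  simpa using (continuous_sqrt.continuousWithinAt (x := 0)).tendsto_nhdsWithin hmaps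

/-- The paper's `p(x, u)` is `bachelierPut (Δ - x) (w 1 - w u)`. -/
noncomputable def bachelierPut (c V : ℝ) : ℝ :=
  c * stdNormalCDF (c / √V) + √V * stdNormalPDF (c / √V)

lemma tendsto_bachelierPut_nhdsGT_zero (c : ℝ) :
    Tendsto (bachelierPut c) (𝓝[>] 0) (𝓝 (max c 0)) := by
  have h := ((tendsto_mul_stdNormalCDF_div_nhdsGT_zero c).add
    (tendsto_mul_stdNormalPDF_div_nhdsGT_zero c)).comp tendsto_sqrt_nhdsGT_zero
  rwa [add_zero] at h

lemma tendsto_intervalIntegral_nhdsLT_nhdsGT_zero {v : ℝ → ℝ} {a b : ℝ} (hab : a < b)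
    (hv_cont : ContinuousOn v (Icc a b)) (hv_pos : ∀ t ∈ Ioo a b, 0 < v t) :
    Tendsto (fun u => ∫ t in u..b, v t) (𝓝[<] b) (𝓝[>] 0) := by
  have hcont : ContinuousWithinAt (fun u => ∫ t in u..b, v t) (Icc a b) b := by
    have := intervalIntegral.continuousOn_primitive_interval_left
      ((hv_cont.integrableOn_Icc (μ := volume)).mono_set (uIcc_of_le hab.le).subset)
    rw [uIcc_of_le hab.le] at this
    exact this b (right_mem_Icc.2 hab.le)
  refine tendsto_nhdsWithin_of_tendsto_nhds_of_eventually_within _ ?_ ?_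
  · simpa using (hcont.mono_of_mem_nhdsWithin (Icc_mem_nhdsLT hab)).tendsto
  · filter_upwards [Ioo_mem_nhdsLT hab] with u hu
    exact intervalIntegral.intervalIntegral_pos_of_pos_on
      (ContinuousOn.intervalIntegrable_of_Icc hu.2.le
        (hv_cont.mono (Icc_subset_Icc hu.1.le le_rfl)))
      (fun t ht => hv_pos t ⟨hu.1.trans ht.1, ht.2⟩) hu.2

/-- The time-dependent Bachelier put pricing function attains the terminal payoff:
for every `x ∈ ℝ`, `p(x,u) → max(Δ−x, 0)` as `u → 1` from the left. -/
theorem bachelier_put_terminal_payoff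
    (Δ : ℝ) (v : ℝ → ℝ)
    (hv_cont : ContinuousOn v (Set.Icc 0 1))
    (hv_pos : ∀ t ∈ Set.Icc (0:ℝ) 1, 0 < v t)
    (w : ℝ → ℝ) (hw : ∀ u, w u = ∫ t in (0:ℝ)..u, v t)
    (p : ℝ → ℝ → ℝ)
    (hp : ∀ x : ℝ, ∀ u ∈ Set.Ico (0:ℝ) 1,
      p x u = (Δ - x) * stdNormalCDF ((Δ - x) / Real.sqrt (w 1 - w u))
        + Real.sqrt (w 1 - w u) * stdNormalPDF ((Δ - x) / Real.sqrt (w 1 - w u))) :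
    ∀ x : ℝ, Filter.Tendsto (fun u => p x u) (nhdsWithin 1 (Set.Iio 1))
      (nhds (max (Δ - x) 0)) := by
  intro x
  have hv_int : ∀ u ∈ Icc (0 : ℝ) 1, IntervalIntegrable v volume 0 u := fun u hu =>
    ContinuousOn.intervalIntegrable_of_Icc hu.1 (hv_cont.mono (Icc_subset_Icc le_rfl hu.2))
  have hvar : Tendsto (fun u => w 1 - w u) (𝓝[<] 1) (𝓝[>] 0) := by
    refine (tendsto_intervalIntegral_nhdsLT_nhdsGT_zero one_pos hv_cont
      fun t ht => hv_pos t (Ioo_subset_Icc_self ht)).congr' ?_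
    filter_upwards [Icc_mem_nhdsLT one_pos] with u hu
    rw [hw, hw, intervalIntegral.integral_interval_sub_left
      (hv_int 1 (right_mem_Icc.2 zero_le_one)) (hv_int u hu)]
  refine ((tendsto_bachelierPut_nhdsGT_zero (Δ - x)).comp hvar).congr' ?_
  filter_upwards [Ico_mem_nhdsLT one_pos] with u hu
  exact (hp x u hu).symm
end

section
/- Let (ξ,η) be a centered two-dimensional Gaussian random vector with covariance matrix Σ = [Σᵢⱼ] and Σ₁₁ = v₀ > 0, let H ∈ (0,1/2] and z ∈ ℝ. Then ∫₀¹ E[ (v₀(1−u))^{−1/2} · φ((z − √u·ξ)/√(v₀(1−u))) · u^H · v₀ · η ] du = (Σ₁₂ · z / (v₀·(H+3/2))) · √v₀ · φ(z/√v₀). -/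
/-!
Put `ζ = η - (Σ₁₂ / v₀) ξ`. The variables `ξ + ζ` and `ξ - ζ` have the same Gaussian law, so `ζ` is
uncorrelated with `ξ`, hence independent of it since `(ξ, ζ)` is jointly Gaussian; therefore
`E[g(ξ) η] = (Σ₁₂ / v₀) E[g(ξ) ξ]` for every bounded `g`. For `g(x)` the `N(√u x, v₀(1 - u))`
density at `z`, the product of the `N(0, v₀)` density at `x` with `g(x)` is symmetric in `(x, z)`,
so `E[g(ξ) ξ] = √u z p(z)` with `p` the `N(0, v₀)` density. What remains is
`∫₀¹ u^(H + 1/2) du = 1 / (H + 3/2)`.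
-/

open MeasureTheory Real Filter

open ProbabilityTheory

open scoped NNReal

lemma gaussianPDFReal_eq_inv_sqrt_mul_stdNormalPDF (μ : ℝ) (v : ℝ≥0) (x : ℝ) :
    gaussianPDFReal μ v x = (√v)⁻¹ * stdNormalPDF ((x - μ) / √v) := by
  rw [gaussianPDFReal_def, stdNormalPDF, div_pow, Real.sq_sqrt v.coe_nonneg,
    Real.sqrt_mul (by positivity)]
  ring_nf

lemma gaussianPDFReal_le (μ : ℝ) (v : ℝ≥0) (x : ℝ) :
    gaussianPDFReal μ v x ≤ (√(2 * π * v))⁻¹ := by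
  rw [gaussianPDFReal_def]
  exact mul_le_of_le_one_right (by positivity) (Real.exp_le_one_iff.2
    (div_nonpos_of_nonpos_of_nonneg (neg_nonpos.2 (sq_nonneg _)) (by positivity)))

lemma gaussianPDFReal_mul_gaussianPDFReal_comm {v s : ℝ≥0} {m : ℝ} (hs₀ : s ≠ 0)
    (hs : (s : ℝ) + m ^ 2 * v = v) (x z : ℝ) :
    gaussianPDFReal 0 v x * gaussianPDFReal (m * x) s z
      = gaussianPDFReal 0 v z * gaussianPDFReal (m * z) s x := by
  have hv : v ≠ 0 := by
    rintro rfl; exact hs₀ (by simpa using hs)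
  simp only [gaussianPDFReal_def]
  rw [mul_mul_mul_comm, mul_mul_mul_comm _ (Real.exp _), ← Real.exp_add, ← Real.exp_add]
  congr 2
  field_simp
  linear_combination (z ^ 2 - x ^ 2) * hs

lemma integral_gaussianPDFReal_mul_gaussianReal {v s : ℝ≥0} {m : ℝ} (hs₀ : s ≠ 0)
    (hs : (s : ℝ) + m ^ 2 * v = v) (z : ℝ) :
    ∫ x, gaussianPDFReal (m * x) s z * x ∂gaussianReal 0 v = m * z * gaussianPDFReal 0 v z := by
  have hv : v ≠ 0 := by
    rintro rfl; exact hs₀ (by simpa using hs)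
  calc ∫ x, gaussianPDFReal (m * x) s z * x ∂gaussianReal 0 v
      = ∫ x, gaussianPDFReal 0 v z * (gaussianPDFReal (m * z) s x * x) := by
        rw [integral_gaussianReal_eq_integral_smul hv]
        congr 1 with x
        rw [smul_eq_mul, ← mul_assoc, gaussianPDFReal_mul_gaussianPDFReal_comm hs₀ hs]
        ring
    _ = gaussianPDFReal 0 v z * ∫ x, x ∂gaussianReal (m * z) s := by
        rw [integral_const_mul, integral_gaussianReal_eq_integral_smul hs₀]
        rfl
    _ = m * z * gaussianPDFReal 0 v z := by rw [integral_id_gaussianReal, mul_comm]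

section

variable {Ω : Type*} [MeasurableSpace Ω] {P : Measure Ω} {X Y : Ω → ℝ}

lemma hasGaussianLaw_prodMk_of_forall_map_eq_gaussianReal (hX : Measurable X)
    (hY : Measurable Y) (h : ∀ a b : ℝ, ∃ (m : ℝ) (v : ℝ≥0),
      P.map (fun ω ↦ a * X ω + b * Y ω) = gaussianReal m v) :
    HasGaussianLaw (fun ω ↦ (X ω, Y ω)) P where
  isGaussian_map := isGaussian_of_map_eq_gaussianReal fun L ↦ by
    obtain ⟨m, v, hmv⟩ := h (L (1, 0)) (L (0, 1))
    refine ⟨m, v, ?_⟩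
    rw [Measure.map_map L.continuous.measurable (hX.prodMk hY), ← hmv]
    congr 1 with ω
    have hω : (X ω, Y ω) = X ω • ((1 : ℝ), (0 : ℝ)) + Y ω • ((0 : ℝ), (1 : ℝ)) := by
      simp
    simp only [Function.comp_apply, hω, map_add, map_smul, smul_eq_mul, mul_comm]

lemma covariance_eq_zero_of_map_add_eq_map_sub [IsFiniteMeasure P] (hX : MemLp X 2 P)
    (hY : MemLp Y 2 P) (h : P.map (fun ω ↦ X ω + Y ω) = P.map (fun ω ↦ X ω - Y ω)) :
    cov[X, Y; P] = 0 := by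
  have hvar : Var[fun ω ↦ X ω + Y ω; P] = Var[fun ω ↦ X ω - Y ω; P] := by
    rw [← variance_id_map (X := fun ω ↦ X ω + Y ω) (hX.aemeasurable.add hY.aemeasurable), h,
      variance_id_map (X := fun ω ↦ X ω - Y ω) (hX.aemeasurable.sub hY.aemeasurable)]
  rw [variance_fun_add hX hY, variance_fun_sub hX hY] at hvar
  linarith

end

/-- `(X, Y)` is a centred Gaussian vector with covariance matrix `!![σ11, σ12; σ12, σ22]`,
described through the laws of all linear combinations of `X` and `Y`. -/
def IsCenteredGaussianPair {Ω : Type*} [MeasurableSpace Ω] (P : Measure Ω) (X Y : Ω → ℝ)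
    (σ11 σ12 σ22 : ℝ) : Prop :=
  ∀ a b : ℝ, P.map (fun ω ↦ a * X ω + b * Y ω)
    = gaussianReal 0 (Real.toNNReal (a ^ 2 * σ11 + 2 * a * b * σ12 + b ^ 2 * σ22))

namespace IsCenteredGaussianPair

variable {Ω : Type*} [MeasurableSpace Ω] {P : Measure Ω} {X Y : Ω → ℝ} {σ11 σ12 σ22 : ℝ}

lemma hasGaussianLaw (h : IsCenteredGaussianPair P X Y σ11 σ12 σ22) (hX : Measurable X)
    (hY : Measurable Y) : HasGaussianLaw (fun ω ↦ (X ω, Y ω)) P :=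
  hasGaussianLaw_prodMk_of_forall_map_eq_gaussianReal hX hY fun a b ↦ ⟨_, _, h a b⟩

lemma integral_mul_add_mul_eq_zero (h : IsCenteredGaussianPair P X Y σ11 σ12 σ22)
    (hX : Measurable X) (hY : Measurable Y) (a b : ℝ) : ∫ ω, (a * X ω + b * Y ω) ∂P = 0 := by
  calc ∫ ω, (a * X ω + b * Y ω) ∂P = ∫ x, x ∂(P.map fun ω ↦ a * X ω + b * Y ω) :=
        (integral_map (by fun_prop) aestronglyMeasurable_id).symm
    _ = 0 := by rw [h a b, integral_id_gaussianReal]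

lemma integral_comp_mul_eq (h : IsCenteredGaussianPair P X Y σ11 σ12 σ22)
    (hX : Measurable X) (hY : Measurable Y) (hσ11 : σ11 ≠ 0) {g : ℝ → ℝ} (hg : Measurable g)
    {C : ℝ} (hgC : ∀ x, ‖g x‖ ≤ C) :
    ∫ ω, g (X ω) * Y ω ∂P = σ12 / σ11 * ∫ ω, g (X ω) * X ω ∂P := by
  set c := σ12 / σ11
  have hXY := h.hasGaussianLaw hX hY
  have := hXY.isProbabilityMeasure
  have hXZ : HasGaussianLaw (fun ω ↦ (X ω, Y ω - c * X ω)) P := by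
    simpa using hXY.map_fun ((ContinuousLinearMap.fst ℝ ℝ ℝ).prod
      (ContinuousLinearMap.snd ℝ ℝ ℝ - c • ContinuousLinearMap.fst ℝ ℝ ℝ))
  have hcov : cov[X, fun ω ↦ Y ω - c * X ω; P] = 0 := by
    refine covariance_eq_zero_of_map_add_eq_map_sub hXZ.fst.memLp_two hXZ.snd.memLp_two ?_
    calc P.map (fun ω ↦ X ω + (Y ω - c * X ω))
        = P.map (fun ω ↦ (1 - c) * X ω + 1 * Y ω) := by congr 1 with ω; ring
      _ = P.map (fun ω ↦ (1 + c) * X ω + (-1) * Y ω) := by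
        rw [h, h]; congr 2; simp only [c]; field_simp; ring
      _ = P.map (fun ω ↦ X ω - (Y ω - c * X ω)) := by congr 1 with ω; ring
  have hind : IndepFun (fun ω ↦ g (X ω)) (fun ω ↦ Y ω - c * X ω) P :=
    (hXZ.indepFun_of_covariance_eq_zero hcov).comp hg measurable_id
  have hgZ : ∫ ω, g (X ω) * (Y ω - c * X ω) ∂P = 0 := by
    rw [hind.integral_fun_mul_eq_mul_integral (hg.comp hX).aestronglyMeasurable (by fun_prop),
      show (fun ω ↦ Y ω - c * X ω) = fun ω ↦ -c * X ω + 1 * Y ω by ext; ring,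
      h.integral_mul_add_mul_eq_zero hX hY, mul_zero]
  have hgC' : ∀ᵐ ω ∂P, ‖g (X ω)‖ ≤ C := ae_of_all _ fun ω ↦ hgC (X ω)
  have hgX : Integrable (fun ω ↦ g (X ω) * X ω) P :=
    hXZ.fst.integrable.bdd_mul (hg.comp hX).aestronglyMeasurable hgC'
  have hgZ' : Integrable (fun ω ↦ g (X ω) * (Y ω - c * X ω)) P :=
    hXZ.snd.integrable.bdd_mul (hg.comp hX).aestronglyMeasurable hgC'
  calc ∫ ω, g (X ω) * Y ω ∂P
      = ∫ ω, (c * (g (X ω) * X ω) + g (X ω) * (Y ω - c * X ω)) ∂P := by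
        congr 1 with ω; ring
    _ = c * ∫ ω, g (X ω) * X ω ∂P := by
        rw [integral_add (hgX.const_mul c) hgZ', integral_const_mul, hgZ, add_zero]

lemma integral_gaussianPDFReal_mul (h : IsCenteredGaussianPair P X Y σ11 σ12 σ22)
    (hX : Measurable X) (hY : Measurable Y) (hσ11 : 0 < σ11) {s : ℝ≥0} {m : ℝ} (hs₀ : s ≠ 0)
    (hs : (s : ℝ) + m ^ 2 * σ11 = σ11) (z : ℝ) :
    ∫ ω, gaussianPDFReal (m * X ω) s z * Y ω ∂P
      = σ12 / σ11 * (m * z * gaussianPDFReal 0 σ11.toNNReal z) := by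
  have hg : Measurable fun x ↦ gaussianPDFReal (m * x) s z := by
    simp only [gaussianPDFReal_def]; fun_prop
  have hlaw : P.map X = gaussianReal 0 σ11.toNNReal := by simpa using h 1 0
  rw [h.integral_comp_mul_eq hX hY hσ11.ne' hg (C := (√(2 * π * s))⁻¹) fun x ↦ by
      rw [Real.norm_of_nonneg (gaussianPDFReal_nonneg _ _ _)]; exact gaussianPDFReal_le _ _ _,
    ← integral_map (f := fun x ↦ gaussianPDFReal (m * x) s z * x) hX.aemeasurable (by fun_prop),
    hlaw, integral_gaussianPDFReal_mul_gaussianReal hs₀ (by rwa [Real.coe_toNNReal _ hσ11.le])]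

lemma integral_stdNormalPDF_mul (h : IsCenteredGaussianPair P X Y σ11 σ12 σ22)
    (hX : Measurable X) (hY : Measurable Y) (hσ11 : 0 < σ11) {u : ℝ} (hu₀ : 0 < u)
    (hu₁ : u < 1) (z : ℝ) :
    ∫ ω, (√(σ11 * (1 - u)))⁻¹ * stdNormalPDF ((z - √u * X ω) / √(σ11 * (1 - u))) * Y ω ∂P
      = σ12 / σ11 * (√u * z * ((√σ11)⁻¹ * stdNormalPDF (z / √σ11))) := by
  have hs : 0 < σ11 * (1 - u) := mul_pos hσ11 (sub_pos.2 hu₁)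
  have h' := h.integral_gaussianPDFReal_mul hX hY hσ11 (s := (σ11 * (1 - u)).toNNReal) (m := √u)
    (by simpa using hs) (by rw [Real.coe_toNNReal _ hs.le, Real.sq_sqrt hu₀.le]; ring) z
  simpa only [gaussianPDFReal_eq_inv_sqrt_mul_stdNormalPDF, Real.coe_toNNReal _ hs.le,
    Real.coe_toNNReal _ hσ11.le, sub_zero] using h'

end IsCenteredGaussianPair

theorem gaussian_alpha_integral_general
    {Ω : Type*} [MeasurableSpace Ω] (P : Measure Ω)
    (ξ η : Ω → ℝ) (hξ : Measurable ξ) (hη : Measurable η)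
    (σ11 σ12 σ22 v₀ : ℝ) (hv₀ : 0 < v₀) (hσ11 : σ11 = v₀)
    (hgauss : ∀ a b : ℝ,
      Measure.map (fun ω => a * ξ ω + b * η ω) P
        = gaussianReal 0 (Real.toNNReal (a ^ 2 * σ11 + 2 * a * b * σ12 + b ^ 2 * σ22)))
    (H : ℝ) (hH : H ∈ Set.Ioc (0:ℝ) (1/2)) (z : ℝ) :
    (∫ u in (0:ℝ)..1, ∫ ω,
        (Real.sqrt (v₀ * (1 - u)))⁻¹
          * stdNormalPDF ((z - Real.sqrt u * ξ ω) / Real.sqrt (v₀ * (1 - u)))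
          * (u ^ H * v₀ * η ω) ∂P)
      = σ12 * z / (v₀ * (H + 3/2)) * Real.sqrt v₀ * stdNormalPDF (z / Real.sqrt v₀) := by
  subst σ11
  have hpair : IsCenteredGaussianPair P ξ η v₀ σ12 σ22 := hgauss
  set C := σ12 * z * ((√v₀)⁻¹ * stdNormalPDF (z / √v₀))
  have hinner : ∀ u ∈ Set.Ioo (0 : ℝ) 1, ∫ ω, (√(v₀ * (1 - u)))⁻¹
      * stdNormalPDF ((z - √u * ξ ω) / √(v₀ * (1 - u))) * (u ^ H * v₀ * η ω) ∂P
        = C * u ^ (H + 1 / 2) := by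
    rintro u ⟨hu₀, hu₁⟩
    calc _ = u ^ H * v₀ * ∫ ω, (√(v₀ * (1 - u)))⁻¹
            * stdNormalPDF ((z - √u * ξ ω) / √(v₀ * (1 - u))) * η ω ∂P := by
          rw [← integral_const_mul]
          congr 1 with ω
          ring
      _ = C * u ^ (H + 1 / 2) := by
          rw [hpair.integral_stdNormalPDF_mul hξ hη hv₀ hu₀ hu₁, Real.rpow_add hu₀,
            ← Real.sqrt_eq_rpow]
          simp only [C]
          field_simp
  rw [intervalIntegral.integral_congr_Ioo_of_le zero_le_one hinner,
    intervalIntegral.integral_const_mul,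
    integral_rpow (by left; linarith [hH.1]), Real.one_rpow, Real.zero_rpow (by linarith [hH.1])]
  simp only [C]
  field_simp
  rw [Real.sq_sqrt hv₀.le]
  ring

/-- For a centered bivariate Gaussian `(ξ,η)` with `Var ξ = Σ₁₁ = v₀ > 0`,
`Cov(ξ,η) = Σ₁₂`, `Var η = Σ₂₂` (joint Gaussianity is expressed by: every linear
combination `a ξ + b η` is Gaussian with the corresponding variance), and
`H ∈ (0,1/2]`, `z ∈ ℝ`:
`∫₀¹ E[(v₀(1−u))^{−1/2} φ((z−√u ξ)/√(v₀(1−u))) u^H v₀ η] du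
  = (Σ₁₂ z/(v₀(H+3/2))) √v₀ φ(z/√v₀)`. -/
theorem gaussian_alpha_integral
    {Ω : Type*} [MeasurableSpace Ω] (P : Measure Ω) [IsProbabilityMeasure P]
    (ξ η : Ω → ℝ) (hξ : Measurable ξ) (hη : Measurable η)
    (σ11 σ12 σ22 v₀ : ℝ) (hv₀ : 0 < v₀) (hσ11 : σ11 = v₀)
    (hgauss : ∀ a b : ℝ,
      Measure.map (fun ω => a * ξ ω + b * η ω) P
        = gaussianReal 0 (Real.toNNReal (a ^ 2 * σ11 + 2 * a * b * σ12 + b ^ 2 * σ22)))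
    (H : ℝ) (hH : H ∈ Set.Ioc (0:ℝ) (1/2)) (z : ℝ) :
    (∫ u in (0:ℝ)..1, ∫ ω,
        (Real.sqrt (v₀ * (1 - u)))⁻¹
          * stdNormalPDF ((z - Real.sqrt u * ξ ω) / Real.sqrt (v₀ * (1 - u)))
          * (u ^ H * v₀ * η ω) ∂P)
      = σ12 * z / (v₀ * (H + 3/2)) * Real.sqrt v₀ * stdNormalPDF (z / Real.sqrt v₀) :=
  gaussian_alpha_integral_general P ξ η hξ hη σ11 σ12 σ22 v₀ hv₀ hσ11 hgauss H hH z
end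

section
/- Let ξ be a centered Gaussian random variable with variance v₀ > 0 and let z ∈ ℝ. Then v₀ · ∫₀¹ E[ (v₀(1−u))^{−1/2} · φ((z − √u·ξ)/√(v₀(1−u))) · √u·ξ ] du = (z·√v₀/2) · φ(z/√v₀). -/
/-!
Write `p_s` for the `N(0, s)` density. Since `v₀ (1 - u) + u v₀ = v₀`, completing the square
gives `p_{v₀}(x) p_{v₀(1-u)}(z - √u x) = p_{v₀}(z) p_{v₀(1-u)}(x - √u z)`: the pair
`(ξ, √u ξ + noise)` is exchangeable. Hence the inner expectation is `√u p_{v₀}(z)` times the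
mean `√u z` of `N(√u z, v₀ (1 - u))`, that is `u z p_{v₀}(z)`, and integrating `u` over `[0, 1]`
gives the `1/2`.
-/

open MeasureTheory Real Filter

open ProbabilityTheory

open scoped NNReal

lemma gaussianPDFReal_mul_gaussianPDFReal_mul_swap {v s : ℝ≥0} {a : ℝ} (hs : s ≠ 0)
    (hsa : (s : ℝ) + a ^ 2 * v = v) (x z : ℝ) :
    gaussianPDFReal 0 v x * gaussianPDFReal (a * x) s z
      = gaussianPDFReal 0 v z * gaussianPDFReal (a * z) s x := by
  have hs' : (0 : ℝ) < s := by positivity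
  have hv : (0 : ℝ) < v := by
    by_contra! h
    nlinarith [v.coe_nonneg, sq_nonneg a]
  simp only [gaussianPDFReal, mul_mul_mul_comm _ (rexp _), ← Real.exp_add]
  congr 2
  field_simp
  linear_combination (z ^ 2 - x ^ 2) * hsa

lemma integral_mul_gaussianPDFReal (μ : ℝ) {v : ℝ≥0} (hv : v ≠ 0) :
    ∫ x, x * gaussianPDFReal μ v x = μ := by
  have h := integral_id_gaussianReal (μ := μ) (v := v)
  rw [integral_gaussianReal_eq_integral_smul hv] at h
  simpa only [smul_eq_mul, mul_comm] using h

lemma integral_gaussianPDFReal_mul_mul_gaussianReal {v s : ℝ≥0} {a : ℝ} (hv : v ≠ 0)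
    (hs : s ≠ 0) (hsa : (s : ℝ) + a ^ 2 * v = v) (z : ℝ) :
    ∫ x, gaussianPDFReal (a * x) s z * (a * x) ∂gaussianReal 0 v
      = a ^ 2 * z * gaussianPDFReal 0 v z := by
  simp_rw [integral_gaussianReal_eq_integral_smul hv, smul_eq_mul, ← mul_assoc,
    gaussianPDFReal_mul_gaussianPDFReal_mul_swap hs hsa]
  calc ∫ x, gaussianPDFReal 0 v z * gaussianPDFReal (a * z) s x * a * x
      = a * gaussianPDFReal 0 v z * ∫ x, x * gaussianPDFReal (a * z) s x := by
        rw [← integral_const_mul]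
        congr 1 with x
        ring
    _ = a ^ 2 * z * gaussianPDFReal 0 v z := by
        rw [integral_mul_gaussianPDFReal _ hs]
        ring

lemma ProbabilityTheory.HasLaw.integral_inv_sqrt_mul_stdNormalPDF_mul {Ω : Type*}
    [MeasurableSpace Ω] {P : Measure Ω} {ξ : Ω → ℝ} {v : ℝ} (hv : 0 < v)
    (hξ : HasLaw ξ (gaussianReal 0 v.toNNReal) P)
    {u : ℝ} (hu0 : 0 < u) (hu1 : u < 1) (z : ℝ) :
    ∫ ω, (√(v * (1 - u)))⁻¹ * stdNormalPDF ((z - √u * ξ ω) / √(v * (1 - u))) * (√u * ξ ω) ∂P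
      = u * (z * gaussianPDFReal 0 v.toNNReal z) := by
  have hs : (v * (1 - u)).toNNReal ≠ 0 := (Real.toNNReal_pos.mpr (by nlinarith)).ne'
  have hsa : ((v * (1 - u)).toNNReal : ℝ) + √u ^ 2 * v.toNNReal = v.toNNReal := by
    rw [Real.coe_toNNReal _ (by nlinarith), Real.coe_toNNReal _ hv.le, Real.sq_sqrt hu0.le]
    ring
  have key := hξ.integral_comp
    (f := fun x ↦ gaussianPDFReal (√u * x) (v * (1 - u)).toNNReal z * (√u * x))
    (by unfold gaussianPDFReal; fun_prop)
  rw [integral_gaussianPDFReal_mul_mul_gaussianReal (Real.toNNReal_pos.mpr hv).ne' hs hsa,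
    Real.sq_sqrt hu0.le] at key
  simpa only [Function.comp_apply, gaussianPDFReal_eq_inv_sqrt_mul_stdNormalPDF, sub_zero,
    Real.coe_toNNReal _ (by nlinarith : 0 ≤ v * (1 - u)), mul_assoc] using key

theorem gaussian_drift_integral_general
    {Ω : Type*} [MeasurableSpace Ω] (P : Measure Ω)
    (ξ : Ω → ℝ)
    (v₀ : ℝ) (hv₀ : 0 < v₀)
    (hlaw : Measure.map ξ P = gaussianReal 0 (Real.toNNReal v₀))
    (z : ℝ) :
    v₀ * (∫ u in (0:ℝ)..1, ∫ ω,
        (Real.sqrt (v₀ * (1 - u)))⁻¹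
          * stdNormalPDF ((z - Real.sqrt u * ξ ω) / Real.sqrt (v₀ * (1 - u)))
          * (Real.sqrt u * ξ ω) ∂P)
      = z * Real.sqrt v₀ / 2 * stdNormalPDF (z / Real.sqrt v₀) := by
  -- `Measure.map` of a non-a.e.-measurable function is `0`, so `hlaw` forces measurability.
  have hξ : HasLaw ξ (gaussianReal 0 v₀.toNNReal) P :=
    ⟨.of_map_ne_zero (hlaw ▸ IsProbabilityMeasure.ne_zero _), hlaw⟩
  -- At `u = 1` the variance `v₀ (1 - u)` vanishes, so the identity only holds on `(0, 1)`.
  rw [intervalIntegral.integral_of_le zero_le_one, integral_Ioc_eq_integral_Ioo,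
    setIntegral_congr_fun measurableSet_Ioo
      fun u hu ↦ hξ.integral_inv_sqrt_mul_stdNormalPDF_mul hv₀ hu.1 hu.2 z,
    ← integral_Ioc_eq_integral_Ioo, ← intervalIntegral.integral_of_le zero_le_one,
    intervalIntegral.integral_mul_const, integral_id,
    gaussianPDFReal_eq_inv_sqrt_mul_stdNormalPDF, Real.coe_toNNReal _ hv₀.le, sub_zero]
  have hsqrt : √v₀ ^ 2 = v₀ := Real.sq_sqrt hv₀.le
  field_simp
  linear_combination -z * stdNormalPDF (z / √v₀) * hsqrt

/-- For `ξ ~ N(0, v₀)` with `v₀ > 0` and `z ∈ ℝ`: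
`v₀ ∫₀¹ E[(v₀(1−u))^{−1/2} φ((z−√u ξ)/√(v₀(1−u))) √u ξ] du = (z √v₀/2) φ(z/√v₀)`. -/
theorem gaussian_drift_integral
    {Ω : Type*} [MeasurableSpace Ω] (P : Measure Ω) [IsProbabilityMeasure P]
    (ξ : Ω → ℝ) (hξ : Measurable ξ)
    (v₀ : ℝ) (hv₀ : 0 < v₀)
    (hlaw : Measure.map ξ P = gaussianReal 0 (Real.toNNReal v₀))
    (z : ℝ) :
    v₀ * (∫ u in (0:ℝ)..1, ∫ ω,
        (Real.sqrt (v₀ * (1 - u)))⁻¹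
          * stdNormalPDF ((z - Real.sqrt u * ξ ω) / Real.sqrt (v₀ * (1 - u)))
          * (Real.sqrt u * ξ ω) ∂P)
      = z * Real.sqrt v₀ / 2 * stdNormalPDF (z / Real.sqrt v₀) :=
  gaussian_drift_integral_general P ξ v₀ hv₀ hlaw z
end
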